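/- For any connected finite simple graph G, the bandwidth of G is at most 2·bfsw(G) − 1, where bfsw(G) = max over vertices v of max over i of |{u : d(v,u)=i}|. -/

import Mathlib

open SimpleGraph

/-- Number of vertices at distance exactly `i` from `v`. -/
noncomputable def layerCard {V : Type*} (G : SimpleGraph V) (v : V) (i : ℕ) : ℕ :=
  ({u : V | G.dist v u = i}).ncard

/-- BFS width of `G` from root `v`: the maximum layer size. -/
noncomputable def bfswFrom {V : Type*} (G : SimpleGraph V) (v : V) : ℕ :=
  sSup (Set.range (layerCard G v))

/-- BFS width of `G`: maximum over roots. -/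
noncomputable def bfsw {V : Type*} (G : SimpleGraph V) : ℕ :=
  sSup (Set.range (bfswFrom G))

/-- Minimum BFS width of `G`: minimum over roots. -/
noncomputable def bfswMin {V : Type*} (G : SimpleGraph V) : ℕ :=
  sInf (Set.range (bfswFrom G))

/-- Bandwidth of `G`: least `b` such that some linear layout has all edges of length `≤ b`. -/
noncomputable def bw {V : Type*} [Fintype V] (G : SimpleGraph V) : ℕ :=
  sInf { b : ℕ | ∃ f : V ≃ Fin (Fintype.card V),
    ∀ u w : V, G.Adj u w → ((f u : ℤ) - (f w : ℤ)).natAbs ≤ b }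

/-! Order the vertices by their distance from a root `v`, breaking ties arbitrarily. Along an
edge `uw` the distance changes by at most one, so every vertex placed between `u` and `w`
(inclusive) lies in the BFS layer of `u` or in that of `w`; so the positions of `u` and `w`
differ by less than `2 bfsw G`. -/

open Finset

section Layout

variable {V : Type*}

theorem layerCard_eq_card_filter [Fintype V] (G : SimpleGraph V) (v : V) (i : ℕ) :
    layerCard G v i = #{u | G.dist v u = i} := by
  rw [layerCard, ← Set.ncard_coe_finset]
  simp

theorem bfswFrom_le_card [Finite V] (G : SimpleGraph V) (v : V) : bfswFrom G v ≤ Nat.card V :=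
  csSup_le (Set.range_nonempty _) (Set.forall_mem_range.2 fun _ => Set.ncard_le_card _)

theorem layerCard_le_bfswFrom [Finite V] (G : SimpleGraph V) (v : V) (i : ℕ) :
    layerCard G v i ≤ bfswFrom G v :=
  le_csSup ⟨Nat.card V, Set.forall_mem_range.2 fun _ => Set.ncard_le_card _⟩ ⟨i, rfl⟩

theorem bfswFrom_le_bfsw [Finite V] (G : SimpleGraph V) (v : V) : bfswFrom G v ≤ bfsw G :=
  le_csSup ⟨Nat.card V, Set.forall_mem_range.2 (bfswFrom_le_card G)⟩ ⟨v, rfl⟩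

theorem layerCard_le_bfsw [Finite V] (G : SimpleGraph V) (v : V) (i : ℕ) :
    layerCard G v i ≤ bfsw G :=
  (layerCard_le_bfswFrom G v i).trans (bfswFrom_le_bfsw G v)

theorem exists_equiv_fin_lt_of_lt [Fintype V] {α : Type*} [LinearOrder α] (d : V → α) :
    ∃ f : V ≃ Fin (Fintype.card V), ∀ a b, d a < d b → f a < f b := by
  let e := Fintype.equivFin V
  let σ := Tuple.sort (d ∘ e.symm)
  refine ⟨e.trans σ.symm, fun a b hab => lt_of_not_ge fun hba => hab.not_ge ?_⟩
  simpa [σ] using Tuple.monotone_sort (d ∘ e.symm) hba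

theorem val_add_one_sub_val_le_card_fiber_add_card_fiber [Fintype V] [DecidableEq V]
    (d : V → ℕ) {f : V ≃ Fin (Fintype.card V)} (hf : ∀ a b, d a < d b → f a < f b) {u w : V}
    (hd : d w ≤ d u + 1) :
    (f w : ℕ) + 1 - f u ≤ #{x | d x = d u} + #{x | d x = d w} := by
  have hmaps : Set.MapsTo f.symm (Icc (f u) (f w)) ({x | d x = d u ∨ d x = d w} : Finset V) := by
    intro p hp
    simp only [coe_Icc, Set.mem_Icc] at hp
    have hup : d u ≤ d (f.symm p) := not_lt.1 fun h => (hf _ _ h).not_ge (by simpa using hp.1)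
    have hpw : d (f.symm p) ≤ d w := not_lt.1 fun h => (hf _ _ h).not_ge (by simpa using hp.2)
    simp only [coe_filter, mem_univ, true_and, Set.mem_ofPred_eq]
    omega
  calc (f w : ℕ) + 1 - f u = #(Icc (f u) (f w)) := (Fin.card_Icc _ _).symm
    _ ≤ #{x | d x = d u ∨ d x = d w} := card_le_card_of_injOn _ hmaps f.symm.injective.injOn
    _ ≤ _ := by rw [filter_or]; exact card_union_le _ _

end Layout

theorem bw_le_two_bfsw_general {V : Type*} [Fintype V] [Nonempty V]
    (G : SimpleGraph V) :
    bw G ≤ 2 * bfsw G - 1 := by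
  classical
  obtain ⟨v⟩ := ‹Nonempty V›
  obtain ⟨f, hf⟩ := exists_equiv_fin_lt_of_lt (G.dist v)
  refine Nat.sInf_le ⟨f, fun u w huw => ?_⟩
  wlog h : f u ≤ f w generalizing u w
  · have := this w u huw.symm (le_of_not_ge h)
    omega
  have hdist : G.dist v w ≤ G.dist v u + 1 := by
    rcases huw.diff_dist_adj (u := v) with h | h | h <;> omega
  have hspan := val_add_one_sub_val_le_card_fiber_add_card_fiber _ hf hdist
  have hu := layerCard_le_bfsw G v (G.dist v u)
  have hw := layerCard_le_bfsw G v (G.dist v w)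
  rw [layerCard_eq_card_filter] at hu hw
  omega

/-- The bandwidth of a connected graph is at most twice its BFS width minus one. -/
theorem bw_le_two_bfsw {V : Type*} [Fintype V] [Nonempty V]
    (G : SimpleGraph V) (hG : G.Connected) :
    bw G ≤ 2 * bfsw G - 1 :=
  bw_le_two_bfsw_general G
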